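/- arXiv:1106.5736 — 4 statements merged into one kernel-verified Lean document; each statement's English description precedes it below -/
import Mathlib

section
/- Lower bound on God's Number for the n×n×1 Rubik's Cube: for every n ≥ 2 there exists g ∈ G(n) such that for every k ∈ ℕ and all moves m₁, …, m_k ∈ S(n) with c₀ ∘ (m_k ⋯ m₁ g)⁻¹ = c₀, one has (2n)^(k+1) ≥ 6^((⌊n/2⌋−1)²). In particular some configurations of the n×n×1 Rubik's Cube are Ω(n²/log n) moves away from being solved. -/
/-- Sticker positions of the `n × n × 1` Rubik's Cube. -/
abbrev RPos (n : ℕ) := Fin n × Fin n × Bool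

/-- Underlying function of the row move `ρ i`. -/
def rowMoveFun (n : ℕ) (i : Fin n) : RPos n → RPos n :=
  fun p => if p.2.1 = i then (p.1.rev, p.2.1, !p.2.2) else p

theorem rowMoveFun_involutive (n : ℕ) (i : Fin n) :
    Function.Involutive (rowMoveFun n i) := by
  rintro ⟨x, y, b⟩
  by_cases h : y = i <;> simp [rowMoveFun, h]

/-- The row move `ρ i`. -/
def rowMove (n : ℕ) (i : Fin n) : Equiv.Perm (RPos n) :=
  (rowMoveFun_involutive n i).toPerm _

/-- Underlying function of the column move `σ j`. -/
def colMoveFun (n : ℕ) (j : Fin n) : RPos n → RPos n :=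
  fun p => if p.1 = j then (p.1, p.2.1.rev, !p.2.2) else p

theorem colMoveFun_involutive (n : ℕ) (j : Fin n) :
    Function.Involutive (colMoveFun n j) := by
  rintro ⟨x, y, b⟩
  by_cases h : x = j <;> simp [colMoveFun, h]

/-- The column move `σ j`. -/
def colMove (n : ℕ) (j : Fin n) : Equiv.Perm (RPos n) :=
  (colMoveFun_involutive n j).toPerm _

/-- The set `S(n)` of the `2n` legal moves. -/
def RMoves (n : ℕ) : Set (Equiv.Perm (RPos n)) :=
  Set.range (rowMove n) ∪ Set.range (colMove n)

/-- The group `G(n)` generated by the legal moves. -/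
def RGroup (n : ℕ) : Subgroup (Equiv.Perm (RPos n)) :=
  Subgroup.closure (RMoves n)

/-- The solved coloring `c₀`. -/
def solvedColoring (n : ℕ) : RPos n → Bool := fun p => p.2.2

/-- The cluster `Cl(x, y)`. -/
def cluster (n : ℕ) (x y : Fin n) : Set (RPos n) :=
  {p | (p.1 = x ∨ p.1 = x.rev) ∧ (p.2.1 = y ∨ p.2.1 = y.rev)}

/-- The configuration of cluster `(x, y)` under a coloring `c`. -/
def clusterConfig (n : ℕ) (c : RPos n → Bool) (x y : Fin n) :
    Bool × Bool → Bool :=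
  fun q => c (if q.1 then x.rev else x, if q.2 then y.rev else y, true)

/-- An interior index pair: `1 ≤ x ≤ ⌊n/2⌋ − 1` and `1 ≤ y ≤ ⌊n/2⌋ − 1`. -/
def Interior (n : ℕ) (x y : Fin n) : Prop :=
  1 ≤ (x : ℕ) ∧ (x : ℕ) ≤ n / 2 - 1 ∧ 1 ≤ (y : ℕ) ∧ (y : ℕ) ≤ n / 2 - 1

/-- The six standard patterns: functions `Bool × Bool → Bool` whose value is
independent of the second argument or independent of the first argument. -/
def StandardPattern (f : Bool × Bool → Bool) : Prop :=
  (∀ ε δ δ', f (ε, δ) = f (ε, δ')) ∨ (∀ ε ε' δ, f (ε, δ) = f (ε', δ))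

/-!
A commutator of a row move and a column move (or of a column move and a pair of opposite row
moves) acts only on the cluster where these lines cross, and the six such words realize the six
standard patterns there. Choosing a pattern independently on each of the `(⌊n/2⌋ − 1)²` pairwise
disjoint clusters of one quadrant yields `6 ^ (⌊n/2⌋ − 1)²` distinct reachable colorings. A
solving sequence determines the coloring it solves, and there are fewer than `(2n) ^ (k + 1)`
sequences of at most `k` moves, so the longest of the chosen solutions has length `k` with
`6 ^ (⌊n/2⌋ − 1)² < (2n) ^ (k + 1)`.
-/

open Finset Function

theorem card_lt_pow_of_injective_of_length_le {ι β : Type*} [Fintype ι] [Fintype β]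
    (hι : 2 ≤ Fintype.card ι) {k : ℕ} (w : β → List ι) (hw : Injective w)
    (hk : ∀ b, (w b).length ≤ k) : Fintype.card β < Fintype.card ι ^ (k + 1) := by
  classical
  let words : Finset (List ι) :=
    (range (k + 1)).biUnion fun j => univ.image (List.Vector.toList : List.Vector ι j → List ι)
  have hw_mem : ∀ b, w b ∈ words := fun b =>
    mem_biUnion.2 ⟨(w b).length, mem_range.2 (Nat.lt_succ_of_le (hk b)),
      mem_image.2 ⟨⟨w b, rfl⟩, mem_univ _, rfl⟩⟩
  calc Fintype.card β ≤ #words := by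
        rw [← card_univ]; exact card_le_card_of_injOn w (fun b _ => hw_mem b) hw.injOn
    _ ≤ ∑ j ∈ range (k + 1), Fintype.card ι ^ j :=
        card_biUnion_le.trans <| sum_le_sum fun j _ =>
          card_image_le.trans (by rw [card_univ, card_vector])
    _ < Fintype.card ι ^ (k + 1) := Nat.geomSum_lt hι fun j hj => mem_range.1 hj

theorem exists_card_lt_pow_length_succ {ι α β : Type*} [Fintype ι] [Fintype β] [Nonempty β]
    (hι : 2 ≤ Fintype.card ι) (f : ι → α) (L : β → List α) (hL : Injective L)
    (hf : ∀ b, L b ∈ Set.range (List.map f)) :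
    ∃ b, Fintype.card β < Fintype.card ι ^ ((L b).length + 1) := by
  choose w hw using hf
  obtain ⟨b, hb⟩ := Finite.exists_max fun b => (L b).length
  refine ⟨b, card_lt_pow_of_injective_of_length_le hι w (fun b₁ b₂ h => hL ?_) fun b' => ?_⟩
  · rw [← hw, ← hw, h]
  · simpa [← hw] using hb b'

namespace Equiv.Perm

variable {α : Type*}

theorem mapsTo_of_apply_eq_self_of_notMem {σ : Perm α} {C : Set α}
    (hσ : ∀ p ∉ C, σ p = p) : Set.MapsTo σ C C := fun p hp => by
  by_contra h
  exact h (by rwa [σ.injective (hσ _ h)])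

theorem list_prod_map_apply_of_pairwise_disjoint {Q : Type*} [DecidableEq Q]
    (σ : Q → Perm α) (C : Q → Set α) (hC : Pairwise (_root_.Disjoint on C))
    (hσ : ∀ q, ∀ p ∉ C q, σ q p = p) {l : List Q} (hl : l.Nodup) {q₀ : Q} {p : α}
    (hp : p ∈ C q₀) : (l.map σ).prod p = if q₀ ∈ l then σ q₀ p else p := by
  induction l with
  | nil => simp
  | cons q l ih =>
    obtain ⟨hq, hl⟩ := List.nodup_cons.1 hl
    rw [List.map_cons, List.prod_cons, mul_apply, ih hl]
    by_cases hq₀ : q = q₀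
    · subst hq₀
      simp [hq]
    · have hfix : ∀ r ∈ C q₀, σ q r = r := fun r hr =>
        hσ q r (Set.disjoint_right.1 (hC hq₀) hr)
      have hmem := mapsTo_of_apply_eq_self_of_notMem (hσ q₀) hp
      simp only [List.mem_cons, Ne.symm hq₀, false_or]
      split_ifs
      · exact hfix _ hmem
      · exact hfix _ hp

end Equiv.Perm

theorem Fin.eq_min_rev {n : ℕ} {a u : Fin n} (hu : u < u.rev) (ha : a = u ∨ a = u.rev) :
    u = min a a.rev := by
  rcases ha with rfl | rfl
  · exact (min_eq_left hu.le).symm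
  · rw [Fin.rev_rev, min_eq_right hu.le]

section Moves

variable {n : ℕ}

theorem rowMove_apply (i : Fin n) (p : RPos n) :
    rowMove n i p = if p.2.1 = i then (p.1.rev, p.2.1, !p.2.2) else p := rfl

theorem colMove_apply (j : Fin n) (p : RPos n) :
    colMove n j p = if p.1 = j then (p.1, p.2.1.rev, !p.2.2) else p := rfl

theorem RMoves_eq_range_sumElim : RMoves n = Set.range (Sum.elim (rowMove n) (colMove n)) :=
  (Set.Sum.elim_range _ _).symm

theorem rowMove_mem_RGroup (i : Fin n) : rowMove n i ∈ RGroup n :=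
  Subgroup.subset_closure (Or.inl ⟨i, rfl⟩)

theorem colMove_mem_RGroup (j : Fin n) : colMove n j ∈ RGroup n :=
  Subgroup.subset_closure (Or.inr ⟨j, rfl⟩)

end Moves

def standardPattern : Fin 6 → Bool × Bool → Bool
  | 0 => fun _ => true
  | 1 => fun _ => false
  | 2 => fun q => q.1
  | 3 => fun q => !q.1
  | 4 => fun q => q.2
  | 5 => fun q => !q.2

theorem standardPattern_injective : Injective standardPattern := by decide

section Cluster

variable {n : ℕ}

/-- Each word is a commutator of a row and a column move (or, for `t = 1`, of a column move
with a pair of row moves), hence acts only on the cluster where these lines cross. -/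
def clusterWord (x y : Fin n) : Fin 6 → List (Equiv.Perm (RPos n))
  | 0 => []
  | 1 => [colMove n x, rowMove n y.rev, rowMove n y,
          colMove n x, rowMove n y.rev, rowMove n y]
  | 2 => [rowMove n y, colMove n x, rowMove n y, colMove n x]
  | 3 => [rowMove n y, colMove n x.rev, rowMove n y, colMove n x.rev]
  | 4 => [colMove n x, rowMove n y, colMove n x, rowMove n y]
  | 5 => [colMove n x, rowMove n y.rev, colMove n x, rowMove n y.rev]

theorem clusterWord_prod_mem_RGroup (x y : Fin n) (t : Fin 6) :
    (clusterWord x y t).prod ∈ RGroup n := by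
  refine Subgroup.list_prod_mem _ fun m hm => ?_
  fin_cases t <;> simp only [clusterWord, List.mem_cons, List.not_mem_nil, or_false] at hm <;>
    rcases hm with rfl | rfl | rfl | rfl | rfl | rfl <;>
    simp only [rowMove_mem_RGroup, colMove_mem_RGroup]

variable {x y : Fin n}

theorem clusterConfig_clusterWord (hx : x < x.rev) (hy : y < y.rev) (t : Fin 6) :
    clusterConfig n (solvedColoring n ∘ (clusterWord x y t).prod) x y = standardPattern t := by
  have := hx.ne; have := hx.ne'; have := hy.ne; have := hy.ne'
  funext ⟨ε, δ⟩
  fin_cases t <;> cases ε <;> cases δ <;>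
    simp_all [clusterConfig, clusterWord, standardPattern, solvedColoring, rowMove_apply,
      colMove_apply]

theorem clusterWord_prod_apply_of_notMem (hx : x < x.rev) (hy : y < y.rev) (t : Fin 6)
    {p : RPos n} (hp : p ∉ cluster n x y) : (clusterWord x y t).prod p = p := by
  obtain ⟨a, c, b⟩ := p
  have := hx.ne; have := hx.ne'; have := hy.ne; have := hy.ne'
  simp only [cluster, Set.mem_ofPred_eq] at hp
  by_cases ha : a = x <;> by_cases ha' : a = x.rev <;> by_cases hc : c = y <;>
    by_cases hc' : c = y.rev <;> fin_cases t <;>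
    simp_all [clusterWord, rowMove_apply, colMove_apply, Fin.rev_eq_iff]

theorem disjoint_cluster {x' y' : Fin n} (hx : x < x.rev) (hy : y < y.rev)
    (hx' : x' < x'.rev) (hy' : y' < y'.rev) (hne : (x, y) ≠ (x', y')) :
    Disjoint (cluster n x y) (cluster n x' y') := by
  refine Set.disjoint_left.2 fun p hp hp' => hne ?_
  rw [Fin.eq_min_rev hx hp.1, Fin.eq_min_rev hy hp.2, Fin.eq_min_rev hx' hp'.1,
    Fin.eq_min_rev hy' hp'.2]

end Cluster

section Scramble

variable {n : ℕ}

/-- Indexes the clusters `(x, y)` with `x, y < ⌊n/2⌋ − 1`; they lie in one quadrant, so distinct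
indices give disjoint clusters. -/
abbrev ClusterIndex (n : ℕ) := Fin (n / 2 - 1) × Fin (n / 2 - 1)

def quadrantEmb (n : ℕ) : Fin (n / 2 - 1) → Fin n := Fin.castLE (by omega)

theorem quadrantEmb_lt_rev (i : Fin (n / 2 - 1)) : quadrantEmb n i < (quadrantEmb n i).rev := by
  have := i.isLt
  rw [Fin.lt_def, Fin.val_rev]
  simp only [quadrantEmb, Fin.val_castLE]
  omega

def clusterSupport (n : ℕ) (q : ClusterIndex n) : Set (RPos n) :=
  cluster n (quadrantEmb n q.1) (quadrantEmb n q.2)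

def clusterMove (P : ClusterIndex n → Fin 6) (q : ClusterIndex n) : Equiv.Perm (RPos n) :=
  (clusterWord (quadrantEmb n q.1) (quadrantEmb n q.2) (P q)).prod

/-- The product of the cluster moves prescribed by `P`; its inverse is the scrambled cube. -/
noncomputable def scramble (P : ClusterIndex n → Fin 6) : Equiv.Perm (RPos n) :=
  ((univ : Finset (ClusterIndex n)).toList.map (clusterMove P)).prod

theorem scramble_mem_RGroup (P : ClusterIndex n → Fin 6) : scramble P ∈ RGroup n :=
  Subgroup.list_prod_mem _ fun _ h => by
    obtain ⟨q, -, rfl⟩ := List.mem_map.1 h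
    exact clusterWord_prod_mem_RGroup _ _ _

theorem scramble_apply_of_mem (P : ClusterIndex n → Fin 6) {q : ClusterIndex n} {p : RPos n}
    (hp : p ∈ clusterSupport n q) : scramble P p = clusterMove P q p := by
  rw [scramble, Equiv.Perm.list_prod_map_apply_of_pairwise_disjoint _ (clusterSupport n)
    ?_ ?_ (nodup_toList _) hp, if_pos (mem_toList.2 (mem_univ q))]
  · intro q₁ q₂ hne
    refine disjoint_cluster (quadrantEmb_lt_rev _) (quadrantEmb_lt_rev _)
      (quadrantEmb_lt_rev _) (quadrantEmb_lt_rev _) fun h => hne ?_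
    simp only [Prod.mk.injEq] at h
    exact Prod.ext (Fin.castLE_injective _ h.1) (Fin.castLE_injective _ h.2)
  · exact fun q' _ hp' => clusterWord_prod_apply_of_notMem (quadrantEmb_lt_rev _)
      (quadrantEmb_lt_rev _) _ hp'

theorem clusterConfig_scramble (P : ClusterIndex n → Fin 6) (q : ClusterIndex n) :
    clusterConfig n (solvedColoring n ∘ scramble P) (quadrantEmb n q.1) (quadrantEmb n q.2) =
      standardPattern (P q) := by
  rw [← clusterConfig_clusterWord (quadrantEmb_lt_rev q.1) (quadrantEmb_lt_rev q.2)]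
  funext ⟨ε, δ⟩
  simp only [clusterConfig, comp_apply]
  rw [scramble_apply_of_mem P]
  · rfl
  · constructor <;> split_ifs <;> simp

theorem solvedColoring_comp_scramble_injective :
    Injective fun P : ClusterIndex n → Fin 6 => solvedColoring n ∘ scramble P := by
  intro P P' h
  funext q
  apply standardPattern_injective
  rw [← clusterConfig_scramble P q, ← clusterConfig_scramble P' q]
  exact congrArg (fun c => clusterConfig n c _ _) h

end Scramble

/-- **Lower bound on God's Number for the `n × n × 1` Rubik's Cube.**
For every `n ≥ 2` there is a reachable configuration `g ∈ G(n)` such that any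
sequence of legal moves `m₁, …, m_k` solving it satisfies
`(2n)^(k+1) ≥ 6^((⌊n/2⌋−1)²)`. -/
theorem nxnx1_gods_number_lower_bound (n : ℕ) (hn : 2 ≤ n) :
    ∃ g ∈ RGroup n, ∀ L : List (Equiv.Perm (RPos n)),
      (∀ m ∈ L, m ∈ RMoves n) →
      solvedColoring n ∘ ⇑(L.prod * g)⁻¹ = solvedColoring n →
      6 ^ ((n / 2 - 1) ^ 2) ≤ (2 * n) ^ (L.length + 1) := by
  by_contra! h
  choose L hL hsolve hshort using fun P => h (scramble P)⁻¹ (inv_mem (scramble_mem_RGroup P))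
  have hcolor : ∀ P, solvedColoring n ∘ scramble P = solvedColoring n ∘ (L P).prod := by
    intro P
    funext p
    simpa [Equiv.Perm.mul_apply] using congrFun (hsolve P) ((L P).prod p)
  obtain ⟨P, hP⟩ := exists_card_lt_pow_length_succ (ι := Fin n ⊕ Fin n)
    (by simp only [Fintype.card_sum, Fintype.card_fin]; omega)
    (Sum.elim (rowMove n) (colMove n)) L
    (fun P P' hPP' => solvedColoring_comp_scramble_injective <| by
      simp only [hcolor, hPP'])
    (fun P => by rw [Set.range_list_map, ← RMoves_eq_range_sumElim]; exact hL P)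
  simp only [Fintype.card_fun, Fintype.card_prod, Fintype.card_fin, Fintype.card_sum, ← sq,
    ← two_mul] at hP
  exact (hshort P).not_gt hP
end

section
/- Classification of reachable cluster configurations: for every n ≥ 2, every g ∈ G(n), and every interior index pair (x, y), the configuration of cluster (x, y) under the coloring c₀ ∘ g⁻¹ is one of the six standard patterns, i.e., it is a function Bool × Bool → Bool whose value is independent of δ or independent of ε. -/
/-!
Write a position of the cluster `(x, y)` as `(ε, δ, b)`. A row move either fixes the cluster or
sends `(ε, δ₀, b) ↦ (!ε, δ₀, !b)` for the one or two values `δ₀` it touches, and dually for column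
moves. Hence the property "the two faces of every cluster position carry opposite colours and the
top faces form a standard pattern" is preserved by every move: in terms of the top faces, a row move
replaces `f (ε, δ₀)` by `!f (!ε, δ₀)`, which keeps a pattern independent of `ε` independent of `ε`,
and keeps a pattern `f (ε, δ) = u ε` either unchanged (if `u` is not constant) or turns it into one
independent of `ε` (if `u` is constant). The solved coloring has this property.
-/

theorem StandardPattern.flip_fst (D : Bool → Prop) [DecidablePred D] {f : Bool × Bool → Bool}
    (hf : StandardPattern f) :
    StandardPattern fun q => if D q.2 then !f (!q.1, q.2) else f q := by
  rcases hf with hδ | hε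
  · by_cases hu : ∀ ε, f (!ε, false) = !f (ε, false)
    · refine Or.inl fun ε δ δ' => ?_
      have hflip : ∀ δ, (!f (!ε, δ)) = f (ε, δ) := fun δ => by
        rw [hδ (!ε) δ false, hu, Bool.not_not, hδ ε δ false]
      simp only [hflip, ite_self]
      exact hδ ε δ δ'
    · obtain ⟨ε₀, hε₀⟩ := not_forall.mp hu
      have hu₀ : f (!ε₀, false) = f (ε₀, false) := by simpa using hε₀
      have hconst : ∀ ε δ, f (ε, δ) = f (ε₀, false) := fun ε δ => by
        rw [hδ ε δ false]
        cases ε₀ <;> cases ε <;> first | rfl | exact hu₀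
      exact Or.inr fun ε ε' δ => by simp only [hconst]
  · exact Or.inr fun ε ε' δ => by
      simp only [hε (!ε) (!ε') δ, hε ε ε' δ]

theorem StandardPattern.comp_swap {f : Bool × Bool → Bool} (hf : StandardPattern f) :
    StandardPattern (f ∘ Prod.swap) :=
  hf.symm.imp (fun h ε δ δ' => h δ δ' ε) fun h ε ε' δ => h δ ε ε'

theorem StandardPattern.flip_snd (D : Bool → Prop) [DecidablePred D] {f : Bool × Bool → Bool}
    (hf : StandardPattern f) :
    StandardPattern fun q => if D q.1 then !f (q.1, !q.2) else f q :=
  (hf.comp_swap.flip_fst D).comp_swap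

variable {n : ℕ}

def Fin.revIf (x : Fin n) (ε : Bool) : Fin n :=
  if ε then x.rev else x

theorem Fin.rev_revIf (x : Fin n) (ε : Bool) : (x.revIf ε).rev = x.revIf !ε := by
  cases ε <;> simp [Fin.revIf]

def clusterPos (x y : Fin n) (ε δ b : Bool) : RPos n :=
  (x.revIf ε, y.revIf δ, b)

theorem rowMove_clusterPos (i x y : Fin n) (ε δ b : Bool) :
    rowMove n i (clusterPos x y ε δ b) =
      if y.revIf δ = i then clusterPos x y (!ε) δ (!b)
      else clusterPos x y ε δ b := by
  simp only [rowMove, Function.Involutive.coe_toPerm, rowMoveFun, clusterPos, Fin.rev_revIf]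

theorem colMove_clusterPos (j x y : Fin n) (ε δ b : Bool) :
    colMove n j (clusterPos x y ε δ b) =
      if x.revIf ε = j then clusterPos x y ε (!δ) (!b)
      else clusterPos x y ε δ b := by
  simp only [colMove, Function.Involutive.coe_toPerm, colMoveFun, clusterPos, Fin.rev_revIf]

theorem rowMove_inv (i : Fin n) : (rowMove n i)⁻¹ = rowMove n i :=
  Function.Involutive.toPerm_symm _

theorem colMove_inv (j : Fin n) : (colMove n j)⁻¹ = colMove n j :=
  Function.Involutive.toPerm_symm _

theorem clusterConfig_apply (c : RPos n → Bool) (x y : Fin n) (ε δ : Bool) :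
    clusterConfig n c x y (ε, δ) = c (clusterPos x y ε δ true) :=
  rfl

def StandardCluster (x y : Fin n) (c : RPos n → Bool) : Prop :=
  (∀ ε δ, c (clusterPos x y ε δ false) = !c (clusterPos x y ε δ true)) ∧
    StandardPattern (clusterConfig n c x y)

namespace StandardCluster

variable {x y : Fin n} {c : RPos n → Bool}

theorem comp_rowMove (h : StandardCluster x y c) (i : Fin n) :
    StandardCluster x y (c ∘ rowMove n i) := by
  obtain ⟨hopp, hpat⟩ := h
  refine ⟨fun ε δ => ?_, ?_⟩
  · simp only [Function.comp_apply, rowMove_clusterPos]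
    split_ifs
    · rw [Bool.not_false, Bool.not_true, hopp, Bool.not_not]
    · exact hopp ε δ
  · convert hpat.flip_fst (fun δ => y.revIf δ = i) using 2 with ⟨ε, δ⟩
    simp only [clusterConfig_apply, Function.comp_apply, rowMove_clusterPos]
    split_ifs
    · exact hopp _ _
    · rfl

theorem comp_colMove (h : StandardCluster x y c) (j : Fin n) :
    StandardCluster x y (c ∘ colMove n j) := by
  obtain ⟨hopp, hpat⟩ := h
  refine ⟨fun ε δ => ?_, ?_⟩
  · simp only [Function.comp_apply, colMove_clusterPos]
    split_ifs
    · rw [Bool.not_false, Bool.not_true, hopp, Bool.not_not]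
    · exact hopp ε δ
  · convert hpat.flip_snd (fun ε => x.revIf ε = j) using 2 with ⟨ε, δ⟩
    simp only [clusterConfig_apply, Function.comp_apply, colMove_clusterPos]
    split_ifs
    · exact hopp _ _
    · rfl

theorem comp_move {m : Equiv.Perm (RPos n)} (hm : m ∈ RMoves n) (h : StandardCluster x y c) :
    StandardCluster x y (c ∘ m) := by
  rcases hm with ⟨i, rfl⟩ | ⟨j, rfl⟩
  · exact h.comp_rowMove i
  · exact h.comp_colMove j

theorem comp_of_mem_RGroup {g : Equiv.Perm (RPos n)} (hg : g ∈ RGroup n)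
    (h : StandardCluster x y c) : StandardCluster x y (c ∘ g) := by
  induction hg using Subgroup.closure_induction'' generalizing c with
  | mem m hm => exact h.comp_move hm
  | inv_mem m hm =>
    rcases hm with ⟨i, rfl⟩ | ⟨j, rfl⟩
    · exact rowMove_inv i ▸ h.comp_rowMove i
    · exact colMove_inv j ▸ h.comp_colMove j
  | one => exact h
  | mul a b _ _ iha ihb => exact ihb (iha h)

end StandardCluster

theorem standardCluster_solvedColoring (x y : Fin n) : StandardCluster x y (solvedColoring n) :=
  ⟨fun _ _ => rfl, Or.inr fun _ _ _ => rfl⟩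

theorem nxnx1_cluster_classification_general (n : ℕ)
    (g : Equiv.Perm (RPos n)) (hg : g ∈ RGroup n)
    (x y : Fin n) :
    StandardPattern (clusterConfig n (solvedColoring n ∘ ⇑g⁻¹) x y) :=
  ((standardCluster_solvedColoring x y).comp_of_mem_RGroup (inv_mem hg)).2

/-- **Classification of reachable cluster configurations.**
For every `n ≥ 2`, every `g ∈ G(n)`, and every interior index pair `(x, y)`,
the configuration of cluster `(x, y)` under the coloring `c₀ ∘ g⁻¹` is one of
the six standard patterns. -/
theorem nxnx1_cluster_classification (n : ℕ) (hn : 2 ≤ n)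
    (g : Equiv.Perm (RPos n)) (hg : g ∈ RGroup n)
    (x y : Fin n) (hxy : Interior n x y) :
    StandardPattern (clusterConfig n (solvedColoring n ∘ ⇑g⁻¹) x y) :=
  nxnx1_cluster_classification_general n g hg x y
end

section
/- Cluster invariance for the n×n×1 cube: for every n, every g ∈ G(n), and every position (x, y, b) ∈ P(n), the image g(x, y, b) has first coordinate in {x, n−1−x} and second coordinate in {y, n−1−y}; that is, no sequence of legal moves can move a cubie out of the set of at most four board positions {(x, y), (x, n−1−y), (n−1−x, y), (n−1−x, n−1−y)}. -/
/- A row or column move replaces one coordinate `x` by its mirror image `x.rev` and leaves the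
other alone, so it preserves the unordered pairs `{x, x.rev}` and `{y, y.rev}`. Hence every
element of `G(n)` preserves them too, which is exactly cluster invariance. -/

namespace Equiv.Perm

variable {α β : Type*}

def fiberwise (f : α → β) : Subgroup (Perm α) where
  carrier := {g | ∀ a, f (g a) = f a}
  one_mem' _ := rfl
  mul_mem' hg hh a := (hg _).trans (hh a)
  inv_mem' {g} hg a := by simpa using (hg (g⁻¹ a)).symm

theorem mem_fiberwise {f : α → β} {g : Perm α} : g ∈ fiberwise f ↔ ∀ a, f (g a) = f a :=
  Iff.rfl

end Equiv.Perm

namespace Fin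

variable {n : ℕ}

def revOrbit (x : Fin n) : Sym2 (Fin n) := s(x, x.rev)

@[simp]
theorem revOrbit_rev (x : Fin n) : x.rev.revOrbit = x.revOrbit := by
  rw [revOrbit, revOrbit, rev_rev, Sym2.eq_swap]

theorem revOrbit_eq_iff {x y : Fin n} : y.revOrbit = x.revOrbit ↔ y = x ∨ y = x.rev := by
  simp only [revOrbit, Sym2.eq_iff, rev_inj]
  constructor
  · rintro (⟨h, -⟩ | ⟨h, -⟩) <;> simp [h]
  · rintro (rfl | rfl) <;> simp

end Fin

open Equiv.Perm Fin

def clusterKey (n : ℕ) (p : RPos n) : Sym2 (Fin n) × Sym2 (Fin n) :=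
  (p.1.revOrbit, p.2.1.revOrbit)

theorem rowMove_mem_fiberwise (n : ℕ) (i : Fin n) : rowMove n i ∈ fiberwise (clusterKey n) := by
  rintro ⟨x, y, b⟩
  by_cases h : y = i <;> simp [rowMove, rowMoveFun, clusterKey, h]

theorem colMove_mem_fiberwise (n : ℕ) (j : Fin n) : colMove n j ∈ fiberwise (clusterKey n) := by
  rintro ⟨x, y, b⟩
  by_cases h : x = j <;> simp [colMove, colMoveFun, clusterKey, h]

theorem rGroup_le_fiberwise (n : ℕ) : RGroup n ≤ fiberwise (clusterKey n) := by
  refine (Subgroup.closure_le _).2 ?_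
  rintro _ (⟨i, rfl⟩ | ⟨j, rfl⟩)
  exacts [rowMove_mem_fiberwise n i, colMove_mem_fiberwise n j]

/-- **Cluster invariance for the `n × n × 1` cube.**
No sequence of legal moves can move a cubie out of its cluster: for every
`g ∈ G(n)` and position `(x, y, b)`, the image `g (x, y, b)` has first
coordinate in `{x, n−1−x}` and second coordinate in `{y, n−1−y}`. -/
theorem nxnx1_cluster_invariance (n : ℕ)
    (g : Equiv.Perm (RPos n)) (hg : g ∈ RGroup n) (p : RPos n) :
    ((g p).1 = p.1 ∨ (g p).1 = p.1.rev) ∧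
    ((g p).2.1 = p.2.1 ∨ (g p).2.1 = p.2.1.rev) := by
  have hkey : clusterKey n (g p) = clusterKey n p := mem_fiberwise.1 (rGroup_le_fiberwise n hg) p
  simpa only [clusterKey, Prod.mk.injEq, revOrbit_eq_iff] using hkey
end

section
/- The subgroup of the permutation group of a 24-element set {1, 2, …, 24} generated by the following 24 three-cycles equals the alternating group on 24 elements: (1 2 12), (4 3 10), (2 4 11), (3 1 9), (5 12 8), (20 13 19), (12 20 24), (13 5 4), (6 11 5), (19 14 18), (11 19 22), (14 6 3), (7 10 6), (18 15 17), (10 18 21), (15 7 1), (8 9 7), (17 16 20), (9 17 23), (16 8 2), (21 22 13), (24 23 15), (22 24 16), (23 21 14). -/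
/-- The three-cycle `(a b c)`, mapping `a ↦ b`, `b ↦ c`, `c ↦ a` and fixing
everything else. -/
def threeCycle (a b c : Fin 24) : Equiv.Perm (Fin 24) :=
  Equiv.swap a c * Equiv.swap a b

/-- The 24 three-cycles of the paper, with the elements `1, …, 24` identified
with `Fin 24` via `k ↦ k − 1`. -/
def clusterGenerators : Set (Equiv.Perm (Fin 24)) :=
  { threeCycle 0 1 11,   -- (1 2 12)
    threeCycle 3 2 9,    -- (4 3 10)
    threeCycle 1 3 10,   -- (2 4 11)
    threeCycle 2 0 8,    -- (3 1 9)
    threeCycle 4 11 7,   -- (5 12 8)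
    threeCycle 19 12 18, -- (20 13 19)
    threeCycle 11 19 23, -- (12 20 24)
    threeCycle 12 4 3,   -- (13 5 4)
    threeCycle 5 10 4,   -- (6 11 5)
    threeCycle 18 13 17, -- (19 14 18)
    threeCycle 10 18 21, -- (11 19 22)
    threeCycle 13 5 2,   -- (14 6 3)
    threeCycle 6 9 5,    -- (7 10 6)
    threeCycle 17 14 16, -- (18 15 17)
    threeCycle 9 17 20,  -- (10 18 21)
    threeCycle 14 6 0,   -- (15 7 1)
    threeCycle 7 8 6,    -- (8 9 7)
    threeCycle 16 15 19, -- (17 16 20)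
    threeCycle 8 16 22,  -- (9 17 23)
    threeCycle 15 7 1,   -- (16 8 2)
    threeCycle 20 21 12, -- (21 22 13)
    threeCycle 23 22 14, -- (24 23 15)
    threeCycle 21 23 15, -- (22 24 16)
    threeCycle 22 20 13  -- (23 21 14)
  }

/-!
A transitive permutation group generated by 3-cycles is primitive. Indeed, if a block `B` has two
points and meets the support of a 3-cycle `g`, then either `g` fixes a point of `B` or `B` contains
`x` and `g x` for some `x`; in both cases `g • B` meets `B`, so `g • B = B`. Hence a nontrivial
block is stable under every generator, and by transitivity it is everything. Jordan's theorem then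
puts the alternating group inside any primitive group containing a 3-cycle. The 24 cluster
generators act transitively because their supports link all 24 points into one chain of triples.
-/

open Equiv Equiv.Perm MulAction Subgroup
open scoped Pointwise

section ThreeCycles

variable {α : Type*} [Fintype α] [DecidableEq α]

theorem Equiv.Perm.IsThreeCycle.smul_eq_of_isBlock {H : Subgroup (Perm α)} {B : Set α}
    (hB : IsBlock H B) (hB' : B.Nontrivial) {g : Perm α} (hg : IsThreeCycle g) (hgH : g ∈ H) :
    g • B = B := by
  suffices ∃ a ∈ B, g a ∈ B by
    obtain ⟨a, ha, hga⟩ := this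
    exact hB.smul_eq_of_mem (g := ⟨g, hgH⟩) ha hga
  by_cases hfix : ∃ w ∈ B, g w = w
  · obtain ⟨w, hw, hgw⟩ := hfix
    exact ⟨w, hw, by rwa [hgw]⟩
  push Not at hfix
  obtain ⟨x, hx, y, hy, hxy⟩ := hB'
  obtain ⟨i, hi, rfl⟩ := (hg.isCycle.sameCycle (hfix x hx) (hfix y hy)).exists_pow_eq'
  rw [hg.orderOf] at hi
  interval_cases i
  · exact absurd rfl hxy
  · exact ⟨x, hx, by simpa using hy⟩
  · have hg3 : g ^ 3 = 1 := hg.orderOf ▸ pow_orderOf_eq_one g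
    refine ⟨_, hy, ?_⟩
    rwa [← mul_apply, ← pow_succ', hg3, one_apply]

theorem isPreprimitive_closure_of_isThreeCycle {S : Set (Perm α)}
    (hS : ∀ g ∈ S, IsThreeCycle g) [IsPretransitive (closure S) α] :
    IsPreprimitive (closure S) α where
  isTrivialBlock_of_isBlock {B} hB := by
    refine or_iff_not_imp_left.2 fun hB' => ?_
    rw [Set.not_subsingleton_iff] at hB'
    have hstab : closure S ≤ stabilizer (Perm α) B := (closure_le _).2 fun g hg =>
      (hS g hg).smul_eq_of_isBlock hB hB' (subset_closure hg)
    obtain ⟨b, hb⟩ := hB'.nonempty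
    refine Set.eq_univ_of_forall fun x => ?_
    obtain ⟨h, rfl⟩ := exists_smul_eq (closure S) b x
    rw [← mem_stabilizer_iff.1 (hstab h.2)]
    exact Set.smul_mem_smul_set hb

theorem closure_eq_alternatingGroup_of_isThreeCycle {S : Set (Perm α)}
    (hS : ∀ g ∈ S, IsThreeCycle g) (hne : S.Nonempty) [IsPretransitive (closure S) α] :
    closure S = alternatingGroup α := by
  obtain ⟨g₀, hg₀⟩ := hne
  refine le_antisymm ((closure_le _).2 fun g hg => (hS g hg).mem_alternatingGroup) ?_
  exact alternatingGroup_le_of_isPreprimitive_of_isThreeCycle_mem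
    (isPreprimitive_closure_of_isThreeCycle hS) (hS g₀ hg₀) (subset_closure hg₀)

end ThreeCycles

section threeCycle

variable {a b c : Fin 24}

theorem threeCycle_apply_left (hab : a ≠ b) (hbc : b ≠ c) : threeCycle a b c a = b := by
  simp [threeCycle, swap_apply_of_ne_of_ne hab.symm hbc]

theorem threeCycle_apply_mid : threeCycle a b c b = c := by
  simp [threeCycle]

theorem isThreeCycle_threeCycle (hab : a ≠ b) (hac : a ≠ c) (hbc : b ≠ c) :
    IsThreeCycle (threeCycle a b c) :=
  isThreeCycle_swap_mul_swap_same hac hab hbc.symm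

theorem orbit_eq_of_threeCycle_mem {H : Subgroup (Perm (Fin 24))} (hab : a ≠ b) (hbc : b ≠ c)
    (h : threeCycle a b c ∈ H) : orbit H a = orbit H b ∧ orbit H b = orbit H c := by
  have key (x : Fin 24) : orbit H (threeCycle a b c x) = orbit H x := orbit_smul (⟨_, h⟩ : H) x
  exact ⟨by rw [← key a, threeCycle_apply_left hab hbc], by rw [← key b, threeCycle_apply_mid]⟩

end threeCycle

theorem isThreeCycle_of_mem_clusterGenerators :
    ∀ g ∈ clusterGenerators, IsThreeCycle g := by
  simp only [clusterGenerators, Set.mem_insert_iff, Set.mem_singleton_iff, forall_eq_or_imp,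
    forall_eq]
  and_intros <;> exact isThreeCycle_threeCycle (by decide) (by decide) (by decide)

theorem isPretransitive_of_clusterGenerators_subset {H : Subgroup (Perm (Fin 24))}
    (hS : clusterGenerators ⊆ H) : IsPretransitive H (Fin 24) := by
  simp only [clusterGenerators, Set.insert_subset_iff, Set.singleton_subset_iff,
    SetLike.mem_coe] at hS
  suffices h : ∀ y : Fin 24, orbit H 0 = orbit H y by
    rw [isPretransitive_iff_orbit_eq_univ 0, Set.eq_univ_iff_forall]
    exact fun y => h y ▸ mem_orbit_self y
  intro y
  fin_cases y <;> grind [→ orbit_eq_of_threeCycle_mem]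

/-- **The 24 listed three-cycles generate the alternating group on 24
elements.** -/
theorem closure_clusterGenerators_eq_alternatingGroup :
    Subgroup.closure clusterGenerators = alternatingGroup (Fin 24) :=
  have := isPretransitive_of_clusterGenerators_subset
    (Subgroup.subset_closure (k := clusterGenerators))
  closure_eq_alternatingGroup_of_isThreeCycle isThreeCycle_of_mem_clusterGenerators
    ⟨_, Set.mem_insert _ _⟩
end
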